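/- arXiv:1102.4891 — 5 statements merged into one kernel-verified Lean document; each statement's English description precedes it below -/
import Mathlib

section
/- The polynomial f₆ = Σ_i x_i⁶ − (15/(n−1)) Σ_{i≠j} x_i² x_j⁴ + (180/((n−1)(n−2))) Σ_{i<j<k} x_i² x_j² x_k² is harmonic in n variables for every n ≥ 3. -/
/-!
Write `p_k = ∑ i, x_i ^ k`. The middle sum of `f₆` is `p₂ p₄ − p₆`, and by Newton's identities in
the squares `x_i²` the last one is `(p₂³ − 3 p₂ p₄ + 2 p₆) / 6`. On power sums the Laplacian is
explicit, `Δ p_k = k (k − 1) p_{k−2}` and `∑ i, ∂ᵢ p_a ∂ᵢ p_b = a b p_{a+b−2}`, so the Leibniz rule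
`Δ (f g) = Δ f · g + 2 ∑ i, ∂ᵢ f ∂ᵢ g + f · Δ g` expresses `Δ f₆` as a combination of `p₄` and
`p₂²` whose two coefficients vanish exactly for the weights `15/(n−1)` and `180/((n−1)(n−2))`.
-/

open MvPolynomial

/-- The polynomial
`f₆ = ∑_i x_i⁶ − (15/(n−1)) ∑_{i≠j} x_i² x_j⁴ + (180/((n−1)(n−2))) ∑_{i<j<k} x_i² x_j² x_k²`. -/
noncomputable def f6 (n : ℕ) : MvPolynomial (Fin n) ℝ :=
  (∑ i, X i ^ 6) -
    C (15 / ((n : ℝ) - 1)) *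
      ∑ p ∈ Finset.univ.offDiag, X p.1 ^ 2 * X p.2 ^ 4 +
    C (180 / (((n : ℝ) - 1) * ((n : ℝ) - 2))) *
      ∑ t ∈ Finset.univ.filter
          (fun t : Fin n × Fin n × Fin n => t.1 < t.2.1 ∧ t.2.1 < t.2.2),
        X t.1 ^ 2 * X t.2.1 ^ 2 * X t.2.2 ^ 2

open Finset

theorem Finset.sum_offDiag_mul {ι M : Type*} [DecidableEq ι] [NonUnitalNonAssocRing M]
    (s : Finset ι) (f g : ι → M) :
    ∑ p ∈ s.offDiag, f p.1 * g p.2 = (∑ i ∈ s, f i) * (∑ i ∈ s, g i) - ∑ i ∈ s, f i * g i := by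
  rw [sum_mul_sum, ← sum_product', ← diag_union_offDiag, sum_union (disjoint_diag_offDiag s),
    diag, sum_map]
  simp

theorem Finset.sum_lt_lt_eq_sum_powersetCard_three {ι M : Type*} [Fintype ι] [LinearOrder ι]
    [CommSemiring M] (f : ι → M) :
    ∑ t ∈ univ.filter (fun t : ι × ι × ι => t.1 < t.2.1 ∧ t.2.1 < t.2.2),
        f t.1 * f t.2.1 * f t.2.2 =
      ∑ s ∈ powersetCard 3 univ, ∏ i ∈ s, f i := by
  have card_triple {a b c : ι} (h : a < b ∧ b < c) : #{a, b, c} = 3 :=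
    card_eq_three.2 ⟨a, b, c, h.1.ne, (h.1.trans h.2).ne, h.2.ne, rfl⟩
  refine sum_bij' (fun t _ => {t.1, t.2.1, t.2.2})
    (fun s hs => let e := s.orderEmbOfFin (mem_powersetCard.1 hs).2; (e 0, e 1, e 2))
    ?_ ?_ ?_ ?_ ?_
  · rintro ⟨a, b, c⟩ h
    rw [mem_filter_univ] at h
    simpa using card_triple h
  · intro s hs
    rw [mem_filter_univ]
    exact ⟨(s.orderEmbOfFin _).strictMono (by decide), (s.orderEmbOfFin _).strictMono (by decide)⟩
  · rintro ⟨a, b, c⟩ h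
    rw [mem_filter_univ] at h
    have hmono : StrictMono ![a, b, c] := by
      refine Fin.strictMono_iff_lt_succ.2 fun i => ?_
      fin_cases i
      exacts [h.1, h.2]
    have hsorted := orderEmbOfFin_unique (card_triple h) (fun x => by fin_cases x <;> simp) hmono
    simp [← hsorted]
  · intro s hs
    ext x
    have hx := Set.ext_iff.1 (range_orderEmbOfFin s (mem_powersetCard.1 hs).2) x
    simp only [Set.mem_range, Fin.exists_fin_succ, IsEmpty.exists_iff, or_false, mem_coe] at hx
    simpa [eq_comm] using hx
  · rintro ⟨a, b, c⟩ h
    rw [mem_filter_univ] at h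
    rw [prod_insert (by simp [h.1.ne, (h.1.trans h.2).ne]), prod_pair h.2.ne, mul_assoc]

namespace MvPolynomial

variable {σ R : Type*} [Fintype σ] [CommRing R]

noncomputable def laplacian : MvPolynomial σ R →ₗ[R] MvPolynomial σ R :=
  ∑ i, (pderiv i).toLinearMap ∘ₗ (pderiv i).toLinearMap

noncomputable def gradInner (f g : MvPolynomial σ R) : MvPolynomial σ R :=
  ∑ i, pderiv i f * pderiv i g

theorem laplacian_apply (f : MvPolynomial σ R) :
    laplacian f = ∑ i, pderiv i (pderiv i f) := by
  simp [laplacian]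

theorem laplacian_C_mul (a : R) (f : MvPolynomial σ R) :
    laplacian (C a * f) = C a * laplacian f := by
  rw [C_mul', map_smul, C_mul']

theorem laplacian_mul (f g : MvPolynomial σ R) :
    laplacian (f * g) = laplacian f * g + 2 * gradInner f g + f * laplacian g := by
  simp only [laplacian_apply, gradInner, pderiv_mul, map_add, mul_sum, sum_mul,
    ← sum_add_distrib]
  exact sum_congr rfl fun i _ => by ring

theorem gradInner_mul_left (f g h : MvPolynomial σ R) :
    gradInner (f * g) h = f * gradInner g h + g * gradInner f h := by
  simp only [gradInner, pderiv_mul, mul_sum, ← sum_add_distrib]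
  exact sum_congr rfl fun i _ => by ring

theorem pderiv_psum (i : σ) (k : ℕ) :
    pderiv i (psum σ R k) = (k : MvPolynomial σ R) * X i ^ (k - 1) := by
  classical
  simp [psum, pderiv_X, Pi.single_apply]

theorem laplacian_psum (k : ℕ) :
    laplacian (psum σ R k) = (k * (k - 1) : ℕ) * psum σ R (k - 2) := by
  simp only [laplacian_apply, pderiv_psum]
  rw [psum, mul_sum]
  refine sum_congr rfl fun i _ => ?_
  rw [← map_natCast (C : R →+* MvPolynomial σ R), pderiv_C_mul, pderiv_pow, pderiv_X_self,
    Nat.sub_sub, map_natCast, Nat.cast_mul]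
  ring

theorem gradInner_psum (a b : ℕ) :
    gradInner (psum σ R a) (psum σ R b) = (a * b : ℕ) * psum σ R (a + b - 2) := by
  simp only [gradInner, pderiv_psum]
  rw [psum, mul_sum]
  refine sum_congr rfl fun i _ => ?_
  rcases Nat.eq_zero_or_pos a with rfl | ha
  · simp
  rcases Nat.eq_zero_or_pos b with rfl | hb
  · simp
  rw [show a + b - 2 = (a - 1) + (b - 1) by omega, pow_add]
  push_cast
  ring

theorem expand_psum (p k : ℕ) : expand p (psum σ R k) = psum σ R (p * k) := by
  simp [psum, ← pow_mul]

theorem expand_esymm (p k : ℕ) :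
    expand p (esymm σ R k) = ∑ s ∈ powersetCard k univ, ∏ i ∈ s, X i ^ p := by
  simp [esymm]

theorem six_mul_esymm_three :
    6 * esymm σ R 3 = psum σ R 1 ^ 3 - 3 * psum σ R 1 * psum σ R 2 + 2 * psum σ R 3 := by
  have newton₂ := mul_esymm_eq_sum σ R 2
  have newton₃ := mul_esymm_eq_sum σ R 3
  simp only [sum_filter, Nat.sum_antidiagonal_succ, Nat.antidiagonal_zero, sum_singleton]
    at newton₂ newton₃
  norm_num [esymm_zero, esymm_one, ← psum_one] at newton₂ newton₃
  linear_combination 2 * newton₃ + psum σ R 1 * newton₂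

theorem laplacian_expand_two_esymm_three [IsDomain R] [CharZero R] :
    laplacian (expand 2 (esymm σ R 3)) =
      ((Fintype.card σ : MvPolynomial σ R) - 2) * (psum σ R 2 ^ 2 - psum σ R 4) := by
  have h := congrArg (fun f => laplacian (expand 2 f)) (six_mul_esymm_three (σ := σ) (R := R))
  simp only [map_mul, map_add, map_sub, map_pow, map_ofNat, expand_psum, mul_assoc] at h
  simp only [← Nat.ofNat_nsmul_eq_mul, map_nsmul] at h
  simp only [Nat.ofNat_nsmul_eq_mul, pow_succ, pow_zero, one_mul, laplacian_mul,
    gradInner_mul_left, laplacian_psum, gradInner_psum] at h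
  norm_num at h
  refine mul_left_cancel₀ (by norm_num : (6 : MvPolynomial σ R) ≠ 0) ?_
  linear_combination h

end MvPolynomial

theorem f6_eq_psum (n : ℕ) :
    f6 n = psum (Fin n) ℝ 6
      - C (15 / ((n : ℝ) - 1)) * (psum (Fin n) ℝ 2 * psum (Fin n) ℝ 4 - psum (Fin n) ℝ 6)
      + C (180 / (((n : ℝ) - 1) * ((n : ℝ) - 2))) * expand 2 (esymm (Fin n) ℝ 3) := by
  rw [f6, sum_offDiag_mul univ (X · ^ 2) (X · ^ 4),
    sum_lt_lt_eq_sum_powersetCard_three (X · ^ 2), expand_esymm]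
  simp only [psum, ← pow_add]

/-- `f₆` is harmonic for every `n ≥ 3`. -/
theorem stmt5 (n : ℕ) (hn : 3 ≤ n) :
    ∑ i, pderiv i (pderiv i (f6 n)) = 0 := by
  have hn3 : (3 : ℝ) ≤ n := by exact_mod_cast hn
  have hn1 : (n : ℝ) - 1 ≠ 0 := by linarith
  have hn2 : (n : ℝ) - 2 ≠ 0 := by linarith
  have h15 : C (15 / ((n : ℝ) - 1)) * ((n : MvPolynomial (Fin n) ℝ) - 1) = 15 := by
    rw [← map_natCast C, ← map_one C, ← map_sub, ← map_mul, div_mul_cancel₀ _ hn1, map_ofNat]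
  have h180 : C (180 / (((n : ℝ) - 1) * ((n : ℝ) - 2))) * ((n : MvPolynomial (Fin n) ℝ) - 2) =
      12 * C (15 / ((n : ℝ) - 1)) := by
    rw [← map_natCast C, ← map_ofNat C 2, ← map_sub, ← map_mul, ← map_ofNat C 12, ← map_mul]
    congr 1
    field_simp
    ring
  rw [← laplacian_apply, f6_eq_psum]
  simp only [map_add, map_sub, laplacian_C_mul]
  simp only [laplacian_mul, laplacian_psum, gradInner_psum, laplacian_expand_two_esymm_three,
    Fintype.card_fin]
  norm_num
  linear_combination (psum (Fin n) ℝ 2 ^ 2 - psum (Fin n) ℝ 4) * h180 - 2 * psum (Fin n) ℝ 4 * h15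
end

section
/- The polynomial f₈ = Σ_i x_i⁸ − (28/(n−1)) Σ_{i≠j} x_i² x_j⁶ + (70/(n−1)) Σ_{i<j} x_i⁴ x_j⁴ is harmonic in n variables for every n ≥ 2. -/
open MvPolynomial

/-- The polynomial
`f₈ = ∑_i x_i⁸ − (28/(n−1)) ∑_{i≠j} x_i² x_j⁶ + (70/(n−1)) ∑_{i<j} x_i⁴ x_j⁴`. -/
noncomputable def f8 (n : ℕ) : MvPolynomial (Fin n) ℝ :=
  (∑ i, X i ^ 8) -
    C (28 / ((n : ℝ) - 1)) *
      ∑ p ∈ Finset.univ.offDiag, X p.1 ^ 2 * X p.2 ^ 6 +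
    C (70 / ((n : ℝ) - 1)) *
      ∑ p ∈ Finset.univ.filter (fun p : Fin n × Fin n => p.1 < p.2),
        X p.1 ^ 4 * X p.2 ^ 4

lemma pderiv_natCast' {n : ℕ} (i : Fin n) (k : ℕ) :
    pderiv i ((k : MvPolynomial (Fin n) ℝ)) = 0 := by
  rw [← map_natCast (C : ℝ →+* MvPolynomial (Fin n) ℝ) k, pderiv_C]

lemma lap_mono {n : ℕ} (i a b : Fin n) (h : a ≠ b) (p q : ℕ) :
    pderiv i (pderiv i ((X a : MvPolynomial (Fin n) ℝ)^p * X b^q)) =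
      (if i = a then ((p*(p-1) : ℕ) : MvPolynomial (Fin n) ℝ) * (X a^(p-2) * X b^q) else 0) +
      (if i = b then ((q*(q-1) : ℕ) : MvPolynomial (Fin n) ℝ) * (X a^p * X b^(q-2)) else 0) := by
  by_cases hia : i = a
  · subst hia
    simp [pderiv_mul, pderiv_pow, pderiv_X_self, pderiv_X_of_ne h.symm, h, pderiv_natCast',
      Nat.sub_sub]
    ring
  · by_cases hib : i = b
    · subst hib
      simp [pderiv_mul, pderiv_pow, pderiv_X_self, pderiv_X_of_ne h, hia, pderiv_natCast',
        Nat.sub_sub]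
      ring
    · simp [pderiv_mul, pderiv_pow, pderiv_X_of_ne (Ne.symm hia), pderiv_X_of_ne (Ne.symm hib),
        hia, hib]

lemma lap_pow {n : ℕ} (i j : Fin n) (m : ℕ) :
    pderiv i (pderiv i ((X j : MvPolynomial (Fin n) ℝ)^m)) =
      if i = j then ((m*(m-1) : ℕ) : MvPolynomial (Fin n) ℝ) * X j^(m-2) else 0 := by
  by_cases hij : i = j
  · subst hij
    simp [pderiv_pow, pderiv_X_self, pderiv_natCast', pderiv_mul, Nat.sub_sub]
    ring
  · simp [pderiv_pow, pderiv_X_of_ne (Ne.symm hij), hij]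

lemma sum_lap_mono {n : ℕ} (a b : Fin n) (h : a ≠ b) (p q : ℕ) :
    ∑ i, pderiv i (pderiv i ((X a : MvPolynomial (Fin n) ℝ)^p * X b^q)) =
      ((p*(p-1) : ℕ) : MvPolynomial (Fin n) ℝ) * (X a^(p-2) * X b^q) +
      ((q*(q-1) : ℕ) : MvPolynomial (Fin n) ℝ) * (X a^p * X b^(q-2)) := by
  simp only [lap_mono _ _ _ h p q]
  rw [Finset.sum_add_distrib]
  simp

lemma sum_lap_pow {n : ℕ} (j : Fin n) (m : ℕ) :
    ∑ i, pderiv i (pderiv i ((X j : MvPolynomial (Fin n) ℝ)^m)) =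
      ((m*(m-1) : ℕ) : MvPolynomial (Fin n) ℝ) * X j^(m-2) := by
  simp only [lap_pow]
  simp

lemma F1 {m : ℕ} :
    ∑ p ∈ (Finset.univ : Finset (Fin (m+1))).offDiag, (X p.2 : MvPolynomial (Fin (m+1)) ℝ)^6 =
      m • ∑ j, (X j : MvPolynomial (Fin (m+1)) ℝ)^6 := by
  have h1 : ∑ p ∈ (Finset.univ : Finset (Fin (m+1))).diag, ((X p.2 : MvPolynomial (Fin (m+1)) ℝ)^6)
      + ∑ p ∈ (Finset.univ : Finset (Fin (m+1))).offDiag, ((X p.2 : MvPolynomial (Fin (m+1)) ℝ)^6)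
      = ∑ p ∈ (Finset.univ ×ˢ Finset.univ : Finset (Fin (m+1) × Fin (m+1))),
          (X p.2 : MvPolynomial (Fin (m+1)) ℝ)^6 := by
    rw [← Finset.sum_union (Finset.disjoint_diag_offDiag _), Finset.diag_union_offDiag]
  rw [Finset.sum_product] at h1
  simp only [Finset.sum_diag, Finset.sum_const, Finset.card_univ, Fintype.card_fin,
    succ_nsmul] at h1
  exact add_left_cancel (h1.trans (add_comm _ _))

lemma offDiag_split {n : ℕ} (g : Fin n × Fin n → MvPolynomial (Fin n) ℝ) :
    ∑ p ∈ (Finset.univ : Finset (Fin n)).offDiag, g p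
      = ∑ p ∈ Finset.univ.filter (fun p : Fin n × Fin n => p.1 < p.2), g p
      + ∑ p ∈ Finset.univ.filter (fun p : Fin n × Fin n => p.2 < p.1), g p := by
  rw [← Finset.sum_union]
  · apply Finset.sum_congr _ (fun _ _ => rfl)
    ext p
    simp only [Finset.mem_offDiag, Finset.mem_union, Finset.mem_filter, Finset.mem_univ, true_and]
    exact ne_iff_lt_or_gt
  · rw [Finset.disjoint_filter]
    intro p _ h1
    simp [asymm h1]

lemma swap_sum {n : ℕ} :
    ∑ p ∈ Finset.univ.filter (fun p : Fin n × Fin n => p.2 < p.1),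
      (X p.1 : MvPolynomial (Fin n) ℝ)^2 * X p.2^4
    = ∑ p ∈ Finset.univ.filter (fun p : Fin n × Fin n => p.1 < p.2),
      (X p.2 : MvPolynomial (Fin n) ℝ)^2 * X p.1^4 := by
  apply Finset.sum_nbij' (fun p => (p.2, p.1)) (fun p => (p.2, p.1)) <;> simp

/-- `f₈` is harmonic for every `n ≥ 2`. -/
theorem stmt6 (n : ℕ) (hn : 2 ≤ n) :
    ∑ i, pderiv i (pderiv i (f8 n)) = 0 := by
  obtain ⟨m, rfl⟩ : ∃ m, n = m + 1 := ⟨n - 1, by omega⟩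
  have hm : (m : ℝ) ≠ 0 := by
    have : (1:ℝ) ≤ m := by exact_mod_cast (by omega : 1 ≤ m)
    linarith
  unfold f8
  simp only [map_sub, map_add, pderiv_C_mul]
  rw [Finset.sum_add_distrib, Finset.sum_sub_distrib, ← Finset.mul_sum, ← Finset.mul_sum]
  -- simplify the constants
  have hc : ((m + 1 : ℕ) : ℝ) - 1 = (m : ℝ) := by push_cast; ring
  rw [hc]
  -- first piece
  have P1 : ∑ i, pderiv i (pderiv i (∑ j, (X j : MvPolynomial (Fin (m+1)) ℝ) ^ 8))
      = 56 * ∑ j, (X j : MvPolynomial (Fin (m+1)) ℝ)^6 := by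
    simp only [map_sum]
    rw [Finset.sum_comm, Finset.sum_congr rfl (fun j _ => sum_lap_pow j 8), ← Finset.mul_sum]
    norm_num
  -- second piece
  have P2 : ∑ i, pderiv i (pderiv i
        (∑ p ∈ (Finset.univ : Finset (Fin (m+1))).offDiag,
          (X p.1 : MvPolynomial (Fin (m+1)) ℝ) ^ 2 * X p.2 ^ 6))
      = 2 * (C (m : ℝ) * ∑ j, (X j : MvPolynomial (Fin (m+1)) ℝ)^6)
        + 30 * ∑ p ∈ (Finset.univ : Finset (Fin (m+1))).offDiag,
            (X p.1 : MvPolynomial (Fin (m+1)) ℝ) ^ 2 * X p.2 ^ 4 := by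
    simp only [map_sum]
    rw [Finset.sum_comm, Finset.sum_congr rfl
      (fun p hp => sum_lap_mono p.1 p.2 (Finset.mem_offDiag.mp hp).2.2 2 6)]
    rw [Finset.sum_add_distrib, ← Finset.mul_sum, ← Finset.mul_sum]
    norm_num [F1, nsmul_eq_mul]
  -- third piece
  have P3 : ∑ i, pderiv i (pderiv i
        (∑ p ∈ Finset.univ.filter (fun p : Fin (m+1) × Fin (m+1) => p.1 < p.2),
          (X p.1 : MvPolynomial (Fin (m+1)) ℝ) ^ 4 * X p.2 ^ 4))
      = 12 * ∑ p ∈ (Finset.univ : Finset (Fin (m+1))).offDiag,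
            (X p.1 : MvPolynomial (Fin (m+1)) ℝ) ^ 2 * X p.2 ^ 4 := by
    simp only [map_sum]
    rw [Finset.sum_comm, Finset.sum_congr rfl
      (fun p hp => sum_lap_mono p.1 p.2 (ne_of_lt (Finset.mem_filter.mp hp).2) 4 4)]
    rw [offDiag_split, swap_sum, mul_add, Finset.mul_sum, Finset.mul_sum,
      ← Finset.sum_add_distrib]
    refine Finset.sum_congr rfl fun p _ => ?_
    norm_num
    ring
  rw [P1, P2, P3]
  have e1 : C ((m:ℝ)) * C (28/(m:ℝ)) = (28 : MvPolynomial (Fin (m+1)) ℝ) := by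
    rw [← C_mul, mul_div_cancel₀ _ hm, map_ofNat]
  have e2 : C (28/(m:ℝ)) * (30 : MvPolynomial (Fin (m+1)) ℝ)
      = C (70/(m:ℝ)) * 12 := by
    rw [← map_ofNat (C : ℝ →+* MvPolynomial (Fin (m+1)) ℝ) 30,
      ← map_ofNat (C : ℝ →+* MvPolynomial (Fin (m+1)) ℝ) 12, ← C_mul, ← C_mul]
    congr 1
    field_simp
    ring
  linear_combination (-2 * ∑ j, (X j : MvPolynomial (Fin (m+1)) ℝ)^6) * e1
    + (- ∑ p ∈ (Finset.univ : Finset (Fin (m+1))).offDiag,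
        (X p.1 : MvPolynomial (Fin (m+1)) ℝ) ^ 2 * X p.2 ^ 4) * e2
end

section
/- For n ≥ 2, let g₂(n) = 5(n² + 11n + 12 + (6n+12)√(n+1)), g₃(n) = (n+1)²(n+2)(2n² + 28n + 30 + (15n+30)√(n+1)), and F(k) = k(k−n−1)(4k² − 4(n+1)k + n² + 5n + 4)·g₂(n) + g₃(n). Then F(k) < 0 for every real k with 1 ≤ k ≤ n. -/
private lemma quad_max (a b c q q1 q2 : ℝ) (h1 : q1 ≤ q) (h2 : q ≤ q2)
    (E1 : a * q1 ^ 2 + b * q1 + c < 0) (E2 : a * q2 ^ 2 + b * q2 + c < 0)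
    (ha : 0 < a) : a * q ^ 2 + b * q + c < 0 := by
  rcases le_or_gt (a * (q + q1) + b) 0 with h | h
  · nlinarith [mul_nonneg (sub_nonneg.2 h1) (neg_nonneg.2 h)]
  · have h' : 0 ≤ a * (q2 + q) + b := by nlinarith
    nlinarith [mul_nonneg (sub_nonneg.2 h2) h']

private lemma stmt12_aux (N s k : ℝ) (hN3 : 3 ≤ N) (hs0 : 0 ≤ s)
    (hk1 : 1 ≤ k) (hkn : k ≤ N - 1) :
    4 * (5 * (N ^ 2 + 9 * N + 2 + (6 * N + 6) * s)) * (k * (N - k)) ^ 2 +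
      (-(N * (N + 3) * (5 * (N ^ 2 + 9 * N + 2 + (6 * N + 6) * s)))) * (k * (N - k)) +
      N ^ 2 * (N + 1) * (2 * N ^ 2 + 24 * N + 4 + (15 * N + 15) * s) < 0 := by
  have hM : (0:ℝ) ≤ N - 3 := by linarith
  have hg2pos : (0:ℝ) < 4 * (5 * (N ^ 2 + 9 * N + 2 + (6 * N + 6) * s)) := by
    nlinarith [mul_nonneg hs0 (by linarith : (0:ℝ) ≤ 6 * N + 6)]
  have hA1 : (0:ℝ) < 3 * N ^ 5 + 9 * N ^ 4 - 83 * N ^ 3 + 181 * N ^ 2 - 130 * N - 40 := by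
    nlinarith [pow_nonneg hM 5, pow_nonneg hM 4, pow_nonneg hM 3, pow_nonneg hM 2, hM]
  have hB1 : (0:ℝ) ≤ s * (15 * (N + 1) * (N - 2) * (N ^ 2 - 3 * N + 4)) := by
    have h4 : (0:ℝ) ≤ N ^ 2 - 3 * N + 4 := by nlinarith [sq_nonneg (N - 2)]
    have : (0:ℝ) ≤ 15 * (N + 1) * (N - 2) * (N ^ 2 - 3 * N + 4) := by
      apply mul_nonneg _ h4
      apply mul_nonneg _ (by linarith)
      linarith
    exact mul_nonneg hs0 this
  have E1 : 4 * (5 * (N ^ 2 + 9 * N + 2 + (6 * N + 6) * s)) * (N - 1) ^ 2 +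
      (-(N * (N + 3) * (5 * (N ^ 2 + 9 * N + 2 + (6 * N + 6) * s)))) * (N - 1) +
      N ^ 2 * (N + 1) * (2 * N ^ 2 + 24 * N + 4 + (15 * N + 15) * s) < 0 := by
    linarith [hA1, hB1]
  have hA2 : (0:ℝ) < 7 * N ^ 5 + 31 * N ^ 4 - 82 * N ^ 3 - 16 * N ^ 2 := by
    nlinarith [pow_nonneg hM 5, pow_nonneg hM 4, pow_nonneg hM 3, pow_nonneg hM 2, hM]
  have hB2 : (0:ℝ) ≤ s * (30 * N ^ 2 * (N + 1) * (N - 2)) := by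
    have : (0:ℝ) ≤ 30 * N ^ 2 * (N + 1) * (N - 2) := by
      apply mul_nonneg _ (by linarith)
      apply mul_nonneg _ (by linarith)
      positivity
    exact mul_nonneg hs0 this
  have E2 : 4 * (5 * (N ^ 2 + 9 * N + 2 + (6 * N + 6) * s)) * (N ^ 2 / 4) ^ 2 +
      (-(N * (N + 3) * (5 * (N ^ 2 + 9 * N + 2 + (6 * N + 6) * s)))) * (N ^ 2 / 4) +
      N ^ 2 * (N + 1) * (2 * N ^ 2 + 24 * N + 4 + (15 * N + 15) * s) < 0 := by
    linarith [hA2, hB2]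
  have hq1 : N - 1 ≤ k * (N - k) := by
    nlinarith [mul_nonneg (by linarith : (0:ℝ) ≤ k - 1) (by linarith : (0:ℝ) ≤ N - 1 - k)]
  have hq2 : k * (N - k) ≤ N ^ 2 / 4 := by nlinarith [sq_nonneg (k - N / 2)]
  exact quad_max _ _ _ (k * (N - k)) (N - 1) (N ^ 2 / 4) hq1 hq2 E1 E2 hg2pos


/-- For `n ≥ 2` and real `1 ≤ k ≤ n`,
`F(k) = k(k−n−1)(4k²−4(n+1)k+n²+5n+4)·g₂(n) + g₃(n) < 0`, where
`g₂(n) = 5(n²+11n+12+(6n+12)√(n+1))` and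
`g₃(n) = (n+1)²(n+2)(2n²+28n+30+(15n+30)√(n+1))`. -/
theorem stmt12 (n : ℕ) (hn : 2 ≤ n) (k : ℝ) (hk1 : 1 ≤ k) (hkn : k ≤ (n : ℝ)) :
    k * (k - (n : ℝ) - 1) *
        (4 * k ^ 2 - 4 * ((n : ℝ) + 1) * k + (n : ℝ) ^ 2 + 5 * (n : ℝ) + 4) *
        (5 * ((n : ℝ) ^ 2 + 11 * (n : ℝ) + 12 +
          (6 * (n : ℝ) + 12) * Real.sqrt ((n : ℝ) + 1))) +
      ((n : ℝ) + 1) ^ 2 * ((n : ℝ) + 2) *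
        (2 * (n : ℝ) ^ 2 + 28 * (n : ℝ) + 30 +
          (15 * (n : ℝ) + 30) * Real.sqrt ((n : ℝ) + 1)) < 0 := by
  have hn' : (2:ℝ) ≤ (n:ℝ) := by exact_mod_cast hn
  have key := stmt12_aux ((n : ℝ) + 1) (Real.sqrt ((n : ℝ) + 1)) k (by linarith)
    (Real.sqrt_nonneg _) hk1 (by linarith)
  calc k * (k - (n : ℝ) - 1) *
        (4 * k ^ 2 - 4 * ((n : ℝ) + 1) * k + (n : ℝ) ^ 2 + 5 * (n : ℝ) + 4) *
        (5 * ((n : ℝ) ^ 2 + 11 * (n : ℝ) + 12 +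
          (6 * (n : ℝ) + 12) * Real.sqrt ((n : ℝ) + 1))) +
      ((n : ℝ) + 1) ^ 2 * ((n : ℝ) + 2) *
        (2 * (n : ℝ) ^ 2 + 28 * (n : ℝ) + 30 +
          (15 * (n : ℝ) + 30) * Real.sqrt ((n : ℝ) + 1))
      = 4 * (5 * (((n : ℝ) + 1) ^ 2 + 9 * ((n : ℝ) + 1) + 2 + (6 * ((n : ℝ) + 1) + 6) * Real.sqrt ((n : ℝ) + 1))) * (k * (((n : ℝ) + 1) - k)) ^ 2 +
        (-(((n : ℝ) + 1) * (((n : ℝ) + 1) + 3) * (5 * (((n : ℝ) + 1) ^ 2 + 9 * ((n : ℝ) + 1) + 2 + (6 * ((n : ℝ) + 1) + 6) * Real.sqrt ((n : ℝ) + 1))))) * (k * (((n : ℝ) + 1) - k)) +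
        ((n : ℝ) + 1) ^ 2 * (((n : ℝ) + 1) + 1) * (2 * ((n : ℝ) + 1) ^ 2 + 24 * ((n : ℝ) + 1) + 4 + (15 * ((n : ℝ) + 1) + 15) * Real.sqrt ((n : ℝ) + 1)) := by
        ring
    _ < 0 := key
end

section
/- The binary dihedral invariant evaluation: for n ≥ 2, F(1) = F(n) = −(n−1)(3n⁴+27n³+10n²+26n+60+(15n³+15n²+60)√(n+1)) < 0, where F(k) = k(k−n−1)(4k²−4(n+1)k+n²+5n+4)·5(n²+11n+12+(6n+12)√(n+1)) + (n+1)²(n+2)(2n²+28n+30+(15n+30)√(n+1)). -/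
/-- For `n ≥ 2`, with
`F(k) = k(k−n−1)(4k²−4(n+1)k+n²+5n+4)·5(n²+11n+12+(6n+12)√(n+1))
        + (n+1)²(n+2)(2n²+28n+30+(15n+30)√(n+1))`,
one has `F(1) = F(n) = −(n−1)(3n⁴+27n³+10n²+26n+60+(15n³+15n²+60)√(n+1)) < 0`. -/
theorem stmt14 (n : ℕ) (hn : 2 ≤ n) :
    let F : ℝ → ℝ := fun k =>
      k * (k - (n : ℝ) - 1) *
          (4 * k ^ 2 - 4 * ((n : ℝ) + 1) * k + (n : ℝ) ^ 2 + 5 * (n : ℝ) + 4) *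
          (5 * ((n : ℝ) ^ 2 + 11 * (n : ℝ) + 12 +
            (6 * (n : ℝ) + 12) * Real.sqrt ((n : ℝ) + 1))) +
        ((n : ℝ) + 1) ^ 2 * ((n : ℝ) + 2) *
          (2 * (n : ℝ) ^ 2 + 28 * (n : ℝ) + 30 +
            (15 * (n : ℝ) + 30) * Real.sqrt ((n : ℝ) + 1))
    let E : ℝ :=
      -(((n : ℝ) - 1) * (3 * (n : ℝ) ^ 4 + 27 * (n : ℝ) ^ 3 + 10 * (n : ℝ) ^ 2 +
        26 * (n : ℝ) + 60 +
        (15 * (n : ℝ) ^ 3 + 15 * (n : ℝ) ^ 2 + 60) * Real.sqrt ((n : ℝ) + 1)))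
    F 1 = E ∧ F (n : ℝ) = E ∧ E < 0 := by
  intro F E
  have hn' : (2 : ℝ) ≤ (n : ℝ) := by exact_mod_cast hn
  have hs : 0 ≤ Real.sqrt ((n : ℝ) + 1) := Real.sqrt_nonneg _
  refine ⟨by show _ = E; unfold F E; ring, by show _ = E; unfold F E; ring, ?_⟩
  show E < 0
  unfold E
  have h1 : (0:ℝ) < (n : ℝ) - 1 := by linarith
  have h2 : (0:ℝ) < 3 * (n : ℝ) ^ 4 + 27 * (n : ℝ) ^ 3 + 10 * (n : ℝ) ^ 2 +
      26 * (n : ℝ) + 60 + (15 * (n : ℝ) ^ 3 + 15 * (n : ℝ) ^ 2 + 60) * Real.sqrt ((n : ℝ) + 1) := by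
    have : 0 ≤ (15 * (n : ℝ) ^ 3 + 15 * (n : ℝ) ^ 2 + 60) * Real.sqrt ((n : ℝ) + 1) := by
      positivity
    nlinarith
  nlinarith [mul_pos h1 h2]
end

section
/- The polynomial f = Σ_{i≠j} x_i x_j⁵ − (10/3) Σ_{i<j} x_i³ x_j³ is harmonic in n variables for every n ≥ 2. -/
open MvPolynomial

lemma lap5 (n : ℕ) (a b : Fin n) (hab : a ≠ b) :
    ∑ i, pderiv i (pderiv i (X a * X b ^ 5 : MvPolynomial (Fin n) ℝ)) = C 20 * (X a * X b ^ 3) := by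
  have h5 : ∀ i : Fin n, pderiv i (5 : MvPolynomial (Fin n) ℝ) = 0 := by
    intro i
    have : (5 : MvPolynomial (Fin n) ℝ) = ((5:ℕ) : MvPolynomial (Fin n) ℝ) := by norm_num
    rw [this, Derivation.map_natCast]
  have : ∀ i : Fin n, pderiv i (pderiv i (X a * X b ^ 5 : MvPolynomial (Fin n) ℝ)) =
      if i = b then C 20 * (X a * X b ^ 3) else 0 := by
    intro i
    by_cases hib : i = b
    · subst hib
      simp [pderiv_mul, pderiv_X, Pi.single_apply, Ne.symm hab, map_ofNat, h5]
      ring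
    · by_cases hia : i = a
      · subst hia
        simp [pderiv_mul, pderiv_X, Pi.single_apply, hab, hib, map_ofNat, h5]
      · simp [pderiv_mul, pderiv_X, Pi.single_apply, hia, hib, map_ofNat, h5]
  rw [Finset.sum_congr rfl (fun i _ => this i), Finset.sum_ite_eq' Finset.univ b]
  simp

lemma lap33 (n : ℕ) (a b : Fin n) (hab : a ≠ b) :
    ∑ i, pderiv i (pderiv i (X a ^ 3 * X b ^ 3 : MvPolynomial (Fin n) ℝ)) =
      C 6 * (X a * X b ^ 3) + C 6 * (X a ^ 3 * X b) := by
  have h3 : ∀ i : Fin n, pderiv i (3 : MvPolynomial (Fin n) ℝ) = 0 := by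
    intro i
    have : (3 : MvPolynomial (Fin n) ℝ) = ((3:ℕ) : MvPolynomial (Fin n) ℝ) := by norm_num
    rw [this, Derivation.map_natCast]
  have : ∀ i : Fin n, pderiv i (pderiv i (X a ^ 3 * X b ^ 3 : MvPolynomial (Fin n) ℝ)) =
      (if i = a then C 6 * (X a * X b ^ 3) else 0) + (if i = b then C 6 * (X a ^ 3 * X b) else 0) := by
    intro i
    by_cases hib : i = b
    · subst hib
      simp [pderiv_mul, pderiv_X, Pi.single_apply, Ne.symm hab, map_ofNat, h3]
      ring
    · by_cases hia : i = a
      · subst hia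
        simp [pderiv_mul, pderiv_X, Pi.single_apply, hab, hib, map_ofNat, h3]
        ring
      · simp [pderiv_mul, pderiv_X, Pi.single_apply, hia, hib, map_ofNat, h3]
  rw [Finset.sum_congr rfl (fun i _ => this i), Finset.sum_add_distrib,
    Finset.sum_ite_eq' Finset.univ a, Finset.sum_ite_eq' Finset.univ b]
  simp

/-- The polynomial `f = ∑_{i≠j} x_i x_j⁵ − (10/3) ∑_{i<j} x_i³ x_j³` is harmonic
for every `n ≥ 2`. -/
theorem stmt15 (n : ℕ) (hn : 2 ≤ n) :
    let f : MvPolynomial (Fin n) ℝ :=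
      (∑ p ∈ Finset.univ.offDiag, X p.1 * X p.2 ^ 5) -
        C (10 / 3) *
          ∑ p ∈ Finset.univ.filter (fun p : Fin n × Fin n => p.1 < p.2),
            X p.1 ^ 3 * X p.2 ^ 3
    ∑ i, pderiv i (pderiv i f) = 0 := by
  intro f
  show ∑ i, pderiv i (pderiv i ((∑ p ∈ Finset.univ.offDiag, X p.1 * X p.2 ^ 5) -
        C (10 / 3) * ∑ p ∈ Finset.univ.filter (fun p : Fin n × Fin n => p.1 < p.2),
            X p.1 ^ 3 * X p.2 ^ 3)) = 0
  simp only [map_sub, pderiv_C_mul, Finset.sum_sub_distrib, ← Finset.mul_sum]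
  have hA : ∑ i, pderiv i (pderiv i ((∑ p ∈ (Finset.univ.offDiag : Finset (Fin n × Fin n)),
      X p.1 * X p.2 ^ 5 : MvPolynomial (Fin n) ℝ))) =
      ∑ p ∈ (Finset.univ.offDiag : Finset (Fin n × Fin n)), C 20 * (X p.1 * X p.2 ^ 3) := by
    simp_rw [map_sum]
    rw [Finset.sum_comm]
    exact Finset.sum_congr rfl fun p hp => lap5 n p.1 p.2 (Finset.mem_offDiag.mp hp).2.2
  have hB : ∑ i, pderiv i (pderiv i ((∑ p ∈ Finset.univ.filter (fun p : Fin n × Fin n => p.1 < p.2),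
      X p.1 ^ 3 * X p.2 ^ 3 : MvPolynomial (Fin n) ℝ))) =
      ∑ p ∈ Finset.univ.filter (fun p : Fin n × Fin n => p.1 < p.2),
        (C 6 * (X p.1 * X p.2 ^ 3) + C 6 * (X p.1 ^ 3 * X p.2)) := by
    simp_rw [map_sum]
    rw [Finset.sum_comm]
    refine Finset.sum_congr rfl fun p hp => ?_
    exact lap33 n p.1 p.2 (ne_of_lt (Finset.mem_filter.mp hp).2)
  rw [hA, hB, sub_eq_zero]
  have hsplit : (Finset.univ.offDiag : Finset (Fin n × Fin n)) =
      Finset.univ.filter (fun p : Fin n × Fin n => p.1 < p.2) ∪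
      Finset.univ.filter (fun p : Fin n × Fin n => p.2 < p.1) := by
    ext p
    simp only [Finset.mem_offDiag, Finset.mem_union, Finset.mem_filter, Finset.mem_univ, true_and]
    exact ⟨fun h => lt_or_gt_of_ne h, fun h => h.elim ne_of_lt ne_of_gt⟩
  have hdisj : Disjoint (Finset.univ.filter (fun p : Fin n × Fin n => p.1 < p.2))
      (Finset.univ.filter (fun p : Fin n × Fin n => p.2 < p.1)) := by
    rw [Finset.disjoint_filter]
    intro p _ h1 h2
    exact absurd h2 (not_lt_of_gt h1)
  rw [hsplit, Finset.sum_union hdisj]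
  have hswap : ∑ p ∈ Finset.univ.filter (fun p : Fin n × Fin n => p.2 < p.1),
      (C 20 * (X p.1 * X p.2 ^ 3) : MvPolynomial (Fin n) ℝ) =
      ∑ p ∈ Finset.univ.filter (fun p : Fin n × Fin n => p.1 < p.2),
      (C 20 * (X p.2 * X p.1 ^ 3) : MvPolynomial (Fin n) ℝ) := by
    refine Finset.sum_nbij' Prod.swap Prod.swap (fun p hp => ?_) (fun p hp => ?_)
      (fun p _ => Prod.swap_swap p) (fun p _ => Prod.swap_swap p) (fun p hp => ?_)
    · simp only [Finset.mem_filter, Finset.mem_univ, true_and] at hp ⊢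
      exact hp
    · simp only [Finset.mem_filter, Finset.mem_univ, true_and] at hp ⊢
      exact hp
    · rfl
  rw [hswap, Finset.mul_sum, ← Finset.sum_add_distrib]
  refine Finset.sum_congr rfl fun p _ => ?_
  have h20 : (C (10/3) : MvPolynomial (Fin n) ℝ) * C 6 = C 20 := by
    rw [← C_mul]; norm_num
  rw [mul_add]
  simp only [← mul_assoc, h20]
  ring
end
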